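/- Let ρ, σ, γ be density operators on finite-dimensional Hilbert spaces, with γ = Σ_i γ_i |i⟩⟨i| diagonal. Then for all x ∈ [0,1] and each index i, β_x(ρ ⊗ |i⟩⟨i| ‖ σ ⊗ γ) = γ_i · β_x(ρ‖σ). -/

import Mathlib

/-!
A test `Q` for `(ρ, σ)` lifts to the test `Q ⊗ |i⟩⟨i|` with the same type-I error and type-II
error `γ_i Tr(σQ)`. Conversely, for a test `Q` on the product, only its `i`-th diagonal block `Q_i`
is seen by `ρ ⊗ |i⟩⟨i|`, so `Q_i` is a test for `(ρ, σ)` with the same type-I error, while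
`Tr((σ ⊗ γ) Q) = Σ_j γ_j Tr(σ Q_j) ≥ γ_i Tr(σ Q_i)`.
-/

open Matrix Filter
open scoped Matrix ComplexOrder

variable {n : Type*} [Fintype n] [DecidableEq n]

/-- `ρ` is a density operator: positive semidefinite with unit trace. -/
def IsDensity (ρ : Matrix n n ℂ) : Prop := ρ.PosSemidef ∧ ρ.trace = 1

/-- Optimal type-II error `β_x(ρ‖σ)` in binary quantum hypothesis testing:
the minimum of `Tr(σQ)` over tests `0 ≤ Q ≤ 1` with `Tr(ρQ) ≥ 1 − x`. -/
noncomputable def betaErr (x : ℝ) (ρ σ : Matrix n n ℂ) : ℝ :=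
  sInf {v : ℝ | ∃ Q : Matrix n n ℂ, Q.PosSemidef ∧ (1 - Q).PosSemidef ∧
    1 - x ≤ ((ρ * Q).trace).re ∧ v = ((σ * Q).trace).re}

open Classical in
/-- Real power of a Hermitian matrix via the spectral decomposition. -/
noncomputable def hrpow (A : Matrix n n ℂ) (α : ℝ) : Matrix n n ℂ :=
  if h : A.IsHermitian then
    (h.eigenvectorUnitary : Matrix n n ℂ) *
      Matrix.diagonal (fun i => ((h.eigenvalues i ^ α : ℝ) : ℂ)) *
      star (h.eigenvectorUnitary : Matrix n n ℂ)
  else A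

open Classical in
/-- Minimal eigenvalue of a Hermitian matrix. -/
noncomputable def lamMin (A : Matrix n n ℂ) : ℝ :=
  if h : A.IsHermitian then ⨅ i, h.eigenvalues i else 0

open Classical in
/-- Maximal eigenvalue of a Hermitian matrix. -/
noncomputable def lamMax (A : Matrix n n ℂ) : ℝ :=
  if h : A.IsHermitian then ⨆ i, h.eigenvalues i else 0

open Classical in
/-- Pinching map `P_σ(X)` with respect to the eigenspaces of `σ`:
in the eigenbasis of `σ`, off-diagonal blocks between distinct eigenvalues are erased. -/
noncomputable def pinch (σ X : Matrix n n ℂ) : Matrix n n ℂ :=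
  if h : σ.IsHermitian then
    (h.eigenvectorUnitary : Matrix n n ℂ) *
      (Matrix.of fun i j =>
        if h.eigenvalues i = h.eigenvalues j then
          (star (h.eigenvectorUnitary : Matrix n n ℂ) * X *
            (h.eigenvectorUnitary : Matrix n n ℂ)) i j
        else 0) *
      star (h.eigenvectorUnitary : Matrix n n ℂ)
  else X

/-- Trace distance `T(A,B) = (1/2)‖A − B‖₁`. -/
noncomputable def traceDist (A B : Matrix n n ℂ) : ℝ :=
  (1 / 2) * ((((Matrix.posSemidef_conjTranspose_mul_self (A - B)).1.eigenvectorUnitary : Matrix n n ℂ) *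
      Matrix.diagonal (((↑) : ℝ → ℂ) ∘ (√·) ∘ (Matrix.posSemidef_conjTranspose_mul_self (A - B)).1.eigenvalues) *
      (star (Matrix.posSemidef_conjTranspose_mul_self (A - B)).1.eigenvectorUnitary : Matrix n n ℂ)).trace).re

/-- `n`-fold tensor (Kronecker) power of a matrix. -/
noncomputable def tensorPow {d : ℕ} (ρ : Matrix (Fin d) (Fin d) ℂ) (m : ℕ) :
    Matrix (Fin m → Fin d) (Fin m → Fin d) ℂ :=
  fun f g => ∏ i, ρ (f i) (g i)

/-- A quantum channel from a `d₁`- to a `d₂`-dimensional system, presented by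
Kraus operators (equivalently, a completely positive trace-preserving map). -/
structure QChannel (d₁ d₂ : ℕ) where
  k : ℕ
  K : Fin k → Matrix (Fin d₂) (Fin d₁) ℂ
  tp : ∑ i, (K i)ᴴ * K i = 1

/-- Action of a quantum channel on a matrix. -/
noncomputable def QChannel.apply {d₁ d₂ : ℕ} (E : QChannel d₁ d₂)
    (X : Matrix (Fin d₁) (Fin d₁) ℂ) : Matrix (Fin d₂) (Fin d₂) ℂ :=
  ∑ i, E.K i * X * (E.K i)ᴴ

/-- Classical Rényi relative entropy of a (commuting) pair of matrices,
`D_α(A‖B) = (1/(α−1)) ln Tr(A^α B^{1−α})`. -/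
noncomputable def renyiDiv (α : ℝ) (A B : Matrix n n ℂ) : ℝ :=
  (α - 1)⁻¹ * Real.log (((hrpow A α * hrpow B (1 - α)).trace).re)

/-- Minimal (sandwiched) Rényi relative entropy, `α ≤ 1/2` branch:
`D̃_α(ρ‖σ) = (1/(α−1)) ln Tr((√σ ρ^{α/(1−α)} √σ)^{1−α})`. -/
noncomputable def minRenyiDiv (α : ℝ) (ρ σ : Matrix n n ℂ) : ℝ :=
  (α - 1)⁻¹ * Real.log
    (((hrpow (hrpow σ (1 / 2) * hrpow ρ (α / (1 - α)) * hrpow σ (1 / 2)) (1 - α)).trace).re)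

open scoped Kronecker

namespace Matrix

section
variable {ι κ 𝕜 : Type*} [Fintype ι] [Fintype κ] [RCLike 𝕜]

open scoped MatrixOrder in
theorem PosSemidef.trace_mul_nonneg {A B : Matrix ι ι 𝕜} (hA : A.PosSemidef)
    (hB : B.PosSemidef) : 0 ≤ (A * B).trace := by
  classical
  obtain ⟨P, rfl⟩ := CStarAlgebra.nonneg_iff_eq_star_mul_self.mp hA.nonneg
  rw [star_eq_conjTranspose, Matrix.mul_assoc, trace_mul_comm]
  exact (hB.mul_mul_conjTranspose_same P).trace_nonneg

theorem PosSemidef.one_sub_kronecker [DecidableEq ι] [DecidableEq κ] {Q : Matrix ι ι 𝕜}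
    {E : Matrix κ κ 𝕜} (hQ : (1 - Q).PosSemidef) (hE : E.PosSemidef) (hE' : (1 - E).PosSemidef) :
    (1 - Q ⊗ₖ E).PosSemidef := by
  have h : 1 - Q ⊗ₖ E = (1 - Q) ⊗ₖ E + (1 : Matrix ι ι 𝕜) ⊗ₖ (1 - E) := by
    rw [sub_eq_iff_eq_add, add_right_comm, ← add_kronecker, sub_add_cancel, ← kronecker_add,
      add_sub_cancel, one_kronecker_one]
  rw [h]
  exact (hQ.kronecker hE).add (PosSemidef.one.kronecker hE')

end

theorem trace_kronecker_diagonal_mul {ι κ α : Type*} [Fintype ι] [Fintype κ] [DecidableEq κ]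
    [CommSemiring α] (A : Matrix ι ι α) (w : κ → α) (Q : Matrix (ι × κ) (ι × κ) α) :
    ((A ⊗ₖ diagonal w) * Q).trace = ∑ k, w k * (A * blockDiag Q k).trace := by
  simp only [trace, diag, mul_apply, kroneckerMap_apply, blockDiag_apply, diagonal_apply,
    Fintype.sum_prod_type, mul_ite, mul_zero, ite_mul, zero_mul, Finset.sum_ite_eq,
    Finset.mem_univ, if_true, Finset.mul_sum]
  rw [Finset.sum_comm]
  refine Finset.sum_congr rfl fun k _ => Finset.sum_congr rfl fun a _ =>
    Finset.sum_congr rfl fun b _ => by ring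

end Matrix

open scoped Pointwise in
theorem Real.sInf_eq_mul_sInf {S T : Set ℝ} {c : ℝ} (hc : 0 ≤ c) (hS : BddBelow S)
    (hST : ∀ v ∈ S, c * v ∈ T) (hTS : ∀ w ∈ T, ∃ v ∈ S, c * v ≤ w) :
    sInf T = c * sInf S := by
  rcases S.eq_empty_or_nonempty with rfl | ⟨v₀, hv₀⟩
  -- then `T` is empty too, and both infima take the junk value `0`
  · have hT : T = ∅ := Set.eq_empty_of_forall_notMem fun w hw => by
      obtain ⟨v, hv, -⟩ := hTS w hw
      exact hv
    simp [hT]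
  have hlow : c * sInf S ∈ lowerBounds T := fun w hw => by
    obtain ⟨v, hv, hvw⟩ := hTS w hw
    exact (mul_le_mul_of_nonneg_left (csInf_le hS hv) hc).trans hvw
  refine le_antisymm ?_ (le_csInf ⟨c * v₀, hST v₀ hv₀⟩ hlow)
  calc sInf T ≤ sInf (c • S) :=
        csInf_le_csInf ⟨_, hlow⟩ (Set.Nonempty.smul_set ⟨v₀, hv₀⟩) <| by
          rintro _ ⟨v, hv, rfl⟩
          exact hST v hv
    _ = c * sInf S := Real.sInf_smul_of_nonneg hc S

section TypeIIErrors
variable {ι κ : Type*} [Fintype ι] [DecidableEq ι] [Fintype κ] [DecidableEq κ]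

def typeIIErrors (x : ℝ) (ρ σ : Matrix ι ι ℂ) : Set ℝ :=
  {v : ℝ | ∃ Q : Matrix ι ι ℂ, Q.PosSemidef ∧ (1 - Q).PosSemidef ∧
    1 - x ≤ ((ρ * Q).trace).re ∧ v = ((σ * Q).trace).re}

theorem betaErr_eq_sInf_typeIIErrors (x : ℝ) (ρ σ : Matrix ι ι ℂ) :
    betaErr x ρ σ = sInf (typeIIErrors x ρ σ) :=
  rfl

theorem bddBelow_typeIIErrors (x : ℝ) (ρ : Matrix ι ι ℂ) {σ : Matrix ι ι ℂ}
    (hσ : σ.PosSemidef) : BddBelow (typeIIErrors x ρ σ) := by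
  refine ⟨0, ?_⟩
  rintro _ ⟨Q, hQ, -, -, rfl⟩
  exact (Complex.nonneg_iff.mp (hσ.trace_mul_nonneg hQ)).1

theorem mul_mem_typeIIErrors_kronecker {x v : ℝ} {ρ σ : Matrix ι ι ℂ}
    (hv : v ∈ typeIIErrors x ρ σ) (g : κ → ℝ) (k : κ) :
    g k * v ∈ typeIIErrors x (ρ ⊗ₖ single k k 1) (σ ⊗ₖ diagonal fun j => (g j : ℂ)) := by
  obtain ⟨Q, hQ, hQ', hρQ, rfl⟩ := hv
  rw [← diagonal_single]
  have hE : (diagonal (Pi.single k (1 : ℂ))).PosSemidef :=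
    .diagonal fun j => by by_cases h : j = k <;> simp [h]
  have hE' : (1 - diagonal (Pi.single k (1 : ℂ))).PosSemidef := by
    rw [← diagonal_one, diagonal_sub]
    exact .diagonal fun j => by by_cases h : j = k <;> simp [h]
  refine ⟨Q ⊗ₖ diagonal (Pi.single k 1), hQ.kronecker hE, hQ'.one_sub_kronecker hE hE', ?_, ?_⟩
  · rw [← mul_kronecker_mul, trace_kronecker, diagonal_mul_diagonal, trace_diagonal]
    simpa [Pi.single_apply] using hρQ
  · rw [← mul_kronecker_mul, trace_kronecker, diagonal_mul_diagonal, trace_diagonal]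
    simp [Pi.single_apply, mul_comm]

theorem exists_mul_le_of_mem_typeIIErrors_kronecker {x w : ℝ} {ρ σ : Matrix ι ι ℂ}
    (hσ : σ.PosSemidef) {g : κ → ℝ} (hg : ∀ j, 0 ≤ g j) (k : κ)
    (hw : w ∈ typeIIErrors x (ρ ⊗ₖ single k k 1) (σ ⊗ₖ diagonal fun j => (g j : ℂ))) :
    ∃ v ∈ typeIIErrors x ρ σ, g k * v ≤ w := by
  obtain ⟨Q, hQ, hQ', hρQ, rfl⟩ := hw
  have hblock : ∀ j, (blockDiag Q j).PosSemidef := fun j => hQ.submatrix (·, j)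
  have hblock' : (1 - blockDiag Q k).PosSemidef := by
    have h : 1 - blockDiag Q k = blockDiag (1 - Q) k := by
      rw [blockDiag_sub, blockDiag_one]
      rfl
    exact h ▸ hQ'.submatrix (·, k)
  refine ⟨_, ⟨blockDiag Q k, hblock k, hblock', ?_, rfl⟩, ?_⟩
  · simpa [← diagonal_single, trace_kronecker_diagonal_mul, Pi.single_apply] using hρQ
  · have hterm : ∀ j, 0 ≤ g j * ((σ * blockDiag Q j).trace).re := fun j =>
      mul_nonneg (hg j) (Complex.nonneg_iff.mp (hσ.trace_mul_nonneg (hblock j))).1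
    rw [trace_kronecker_diagonal_mul, Complex.re_sum]
    simp only [Complex.re_ofReal_mul]
    exact Finset.single_le_sum (fun j _ => hterm j) (Finset.mem_univ k)

end TypeIIErrors

open Kronecker in
theorem betaErr_kronecker_diagonal_general {d m : ℕ} (ρ σ : Matrix (Fin d) (Fin d) ℂ)
    (hσ : IsDensity σ)
    (g : Fin m → ℝ) (hg : ∀ i, 0 ≤ g i)
    (x : ℝ) (i : Fin m) :
    betaErr x (ρ ⊗ₖ Matrix.single i i (1 : ℂ))
        (σ ⊗ₖ Matrix.diagonal fun j => (g j : ℂ)) = g i * betaErr x ρ σ := by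
  rw [betaErr_eq_sInf_typeIIErrors, betaErr_eq_sInf_typeIIErrors]
  exact Real.sInf_eq_mul_sInf (hg i) (bddBelow_typeIIErrors x ρ hσ.1)
    (fun _ hv => mul_mem_typeIIErrors_kronecker hv g i)
    (fun _ hw => exists_mul_le_of_mem_typeIIErrors_kronecker hσ.1 hg i hw)

open Kronecker in
/-- Hypothesis testing against a product with a diagonal ancilla:
`β_x(ρ ⊗ |i⟩⟨i| ‖ σ ⊗ γ) = γ_i · β_x(ρ‖σ)`. -/
theorem betaErr_kronecker_diagonal {d m : ℕ} (ρ σ : Matrix (Fin d) (Fin d) ℂ)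
    (hρ : IsDensity ρ) (hσ : IsDensity σ)
    (g : Fin m → ℝ) (hg : ∀ i, 0 ≤ g i) (hgs : ∑ i, g i = 1)
    (x : ℝ) (hx : x ∈ Set.Icc (0 : ℝ) 1) (i : Fin m) :
    betaErr x (ρ ⊗ₖ Matrix.single i i (1 : ℂ))
        (σ ⊗ₖ Matrix.diagonal fun j => (g j : ℂ)) = g i * betaErr x ρ σ :=
  betaErr_kronecker_diagonal_general ρ σ hσ g hg x i
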